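/- Let I be the Fisher-type positive definite matrix and suppose I = Id, let S be a positive semidefinite penalty matrix, V_β = (I+S)^{-1}, V_{β̂} = (I+S)^{-1} I (I+S)^{-1}, and Δ = ((I+S)^{-1} I - Id)β for a random vector β with mean 0 and covariance S^- (Moore–Penrose pseudoinverse), where the column space of S^- is contained in the column space of S. Then V_{β̂} + E[Δ Δᵀ] = V_β, that is, (Id+S)^{-2} + ((Id+S)^{-1} - Id) S^- ((Id+S)^{-1} - Id)ᵀ = (Id+S)^{-1}. -/
import Mathlib


open Matrix

/-- For a real symmetric positive semidefinite p×p matrix S with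
Moore–Penrose pseudoinverse S⁻ (characterized by the four Penrose conditions),
in the reparameterized case I = Id:
`(Id+S)⁻² + ((Id+S)⁻¹ − Id) S⁻ ((Id+S)⁻¹ − Id)ᵀ = (Id+S)⁻¹`. -/
theorem stmt1 (p : ℕ) (S Spinv : Matrix (Fin p) (Fin p) ℝ)
    (hS : S.PosSemidef)
    (h1 : S * Spinv * S = S)
    (h2 : Spinv * S * Spinv = Spinv)
    (h3 : (S * Spinv)ᵀ = S * Spinv)
    (h4 : (Spinv * S)ᵀ = Spinv * S) :
    (1 + S)⁻¹ * (1 + S)⁻¹ + ((1 + S)⁻¹ - 1) * Spinv * ((1 + S)⁻¹ - 1)ᵀ = (1 + S)⁻¹ := by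
  have hPD : (1 + S).PosDef := Matrix.PosDef.add_posSemidef Matrix.PosDef.one hS
  have hU : IsUnit (1 + S) := hPD.isUnit
  set A := (1 + S)⁻¹ with hA
  have hinv : A * (1 + S) = 1 := nonsing_inv_mul _ ((isUnit_iff_isUnit_det _).mp hU)
  have hinv' : (1 + S) * A = 1 := mul_nonsing_inv _ ((isUnit_iff_isUnit_det _).mp hU)
  have hSsym : Sᵀ = S := hS.isHermitian
  have hAsym : Aᵀ = A := by
    rw [hA, transpose_nonsing_inv, transpose_add, transpose_one, hSsym]
  have hkey : A - 1 = -(A * S) := by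
    have : A * 1 + A * S = 1 := by rw [← mul_add]; exact hinv
    rw [mul_one] at this
    linear_combination (norm := noncomm_ring) this
  rw [hkey]
  have : (-(A * S)) * Spinv * (-(A * S))ᵀ = A * S * A := by
    rw [transpose_neg, transpose_mul, hSsym, hAsym]
    calc -(A * S) * Spinv * -(S * A) = A * (S * Spinv * S) * A := by noncomm_ring
      _ = A * S * A := by rw [h1]
  rw [this]
  calc A * A + A * S * A = A * (1 + S) * A := by noncomm_ring
    _ = A := by rw [mul_assoc, hinv', mul_one]
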